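/- Every I-stable set S ⊆ ℤ² containing {(0,0),(0,1),(1,0)} contains the point (−1,−1), and also contains {(3,−1),(−1,3),(4,1),(1,−4),(4,0),(5,0)}; in particular S contains the translate {(0,0),(1,0),(0,1),(−1,−1)} + (4,0). -/

import Mathlib

/-- Embed a lattice point into the plane. -/
def toR (p : ℤ × ℤ) : ℝ × ℝ := ((p.1 : ℝ), (p.2 : ℝ))

/-- Determinant of the 2×2 matrix with columns `u`, `v`. -/
def det2 (u v : ℤ × ℤ) : ℤ := u.1 * v.2 - u.2 * v.1

/-- The set of lattice points in the (closed) triangle with vertices `a b c`. -/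
def triPts (a b c : ℤ × ℤ) : Set (ℤ × ℤ) :=
  {p | toR p ∈ convexHull ℝ {toR a, toR b, toR c}}

/-- A border triangle: a lattice triangle with exactly 4 lattice points, whose
fourth point lies on the boundary (not in the interior). -/
def IsBorderTri (T : Set (ℤ × ℤ)) : Prop :=
  ∃ a b c d : ℤ × ℤ, det2 (b - a) (c - a) ≠ 0 ∧
    T = triPts a b c ∧ T = {a, b, c, d} ∧ T.ncard = 4 ∧
    toR d ∉ interior (convexHull ℝ {toR a, toR b, toR c})

/-- An internal triangle: a lattice triangle with exactly 4 lattice points, whose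
fourth point lies in the interior. -/
def IsInternalTri (T : Set (ℤ × ℤ)) : Prop :=
  ∃ a b c d : ℤ × ℤ, det2 (b - a) (c - a) ≠ 0 ∧
    T = triPts a b c ∧ T = {a, b, c, d} ∧ T.ncard = 4 ∧
    toR d ∈ interior (convexHull ℝ {toR a, toR b, toR c})

/-- `S` is B-stable: no border triangle has exactly three of its points in `S`. -/
def BStable (S : Set (ℤ × ℤ)) : Prop :=
  ∀ T, IsBorderTri T → (T ∩ S).ncard ≠ 3

/-- `S` is I-stable: no internal triangle has exactly three of its points in `S`. -/
def IStable (S : Set (ℤ × ℤ)) : Prop :=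
  ∀ T, IsInternalTri T → (T ∩ S).ncard ≠ 3

/-- Upper density of a subset of `ℤ²`. -/
noncomputable def upperDensity (S : Set (ℤ × ℤ)) : ℝ :=
  Filter.limsup (fun n : ℕ =>
    ((S ∩ Set.Icc (-(n : ℤ), -(n : ℤ)) ((n : ℤ), (n : ℤ))).ncard : ℝ) /
      (2 * (n : ℝ) + 1) ^ 2) Filter.atTop

/-! Membership of a lattice point in a lattice triangle is read off the signs of three
2×2 determinants (its unnormalised barycentric coordinates), and a triangle's lattice points lie
in its bounding box; so each triangle used can be certified internal by a finite computation.
I-stability then adds the missing fourth point one triangle at a time, producing in turn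
(−1,−1), (3,−1), (−1,3), (4,1), (1,−4), (4,0) and (5,0). -/

def cross (u v : ℝ × ℝ) : ℝ := u.1 * v.2 - u.2 * v.1

lemma convex_halfPlane (u P : ℝ × ℝ) : Convex ℝ {x | 0 ≤ cross u (x - P)} := by
  have hlin : IsLinearMap ℝ (cross u) :=
    ⟨fun x y => by simp only [cross, Prod.fst_add, Prod.snd_add]; ring,
     fun c x => by simp only [cross, Prod.smul_fst, Prod.smul_snd, smul_eq_mul]; ring⟩
  have hsub (x : ℝ × ℝ) : cross u (x - P) = cross u x - cross u P := by
    simp only [cross, Prod.fst_sub, Prod.snd_sub]; ring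
  simpa only [hsub, sub_nonneg] using convex_halfSpace_ge hlin (cross u P)

lemma cross_sub_nonneg_of_mem_convexHull {A B C P Q x : ℝ × ℝ}
    (hA : 0 ≤ cross (Q - P) (A - P)) (hB : 0 ≤ cross (Q - P) (B - P))
    (hC : 0 ≤ cross (Q - P) (C - P)) (hx : x ∈ convexHull ℝ {A, B, C}) :
    0 ≤ cross (Q - P) (x - P) :=
  convexHull_min (by simp [Set.insert_subset_iff, hA, hB, hC]) (convex_halfPlane _ _) hx

lemma mem_convexHull_of_cross_nonneg {A B C x : ℝ × ℝ} (hD : 0 < cross (B - A) (C - A))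
    (hA : 0 ≤ cross (C - B) (x - B)) (hB : 0 ≤ cross (A - C) (x - C))
    (hC : 0 ≤ cross (B - A) (x - A)) :
    x ∈ convexHull ℝ {A, B, C} := by
  -- the barycentric coordinates of `x` are the three cross products divided by `D`
  set D := cross (B - A) (C - A)
  set w : Fin 3 → ℝ := ![cross (C - B) (x - B), cross (A - C) (x - C), cross (B - A) (x - A)]
  have hw : ∑ i, w i = D := by
    simp only [w, D, Fin.sum_univ_three, Matrix.cons_val, cross, Prod.fst_sub, Prod.snd_sub]
    ring
  have hwz : ∑ i, w i • ![A, B, C] i = D • x := by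
    simp only [w, D, Fin.sum_univ_three, Matrix.cons_val, cross]
    ext <;> simp only [Prod.fst_sub, Prod.snd_sub, Prod.fst_add, Prod.snd_add, Prod.smul_fst,
      Prod.smul_snd, smul_eq_mul] <;> ring
  have hx : ∑ i, (D⁻¹ * w i) • ![A, B, C] i = x := by
    simp_rw [mul_smul, ← Finset.smul_sum, hwz, inv_smul_smul₀ hD.ne']
  rw [← hx]
  refine (convex_convexHull ℝ _).sum_mem (fun i _ => ?_) ?_ (fun i _ => ?_)
  · fin_cases i <;> simp only [w] <;> positivity
  · rw [← Finset.mul_sum, hw, inv_mul_cancel₀ hD.ne']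
  · fin_cases i <;> exact subset_convexHull ℝ _ (by simp)

lemma mem_interior_convexHull_of_cross_pos {A B C x : ℝ × ℝ} (hD : 0 < cross (B - A) (C - A))
    (hA : 0 < cross (C - B) (x - B)) (hB : 0 < cross (A - C) (x - C))
    (hC : 0 < cross (B - A) (x - A)) :
    x ∈ interior (convexHull ℝ {A, B, C}) := by
  have hcont (P Q : ℝ × ℝ) : Continuous fun y => cross (Q - P) (y - P) := by
    simp only [cross, Prod.fst_sub, Prod.snd_sub]; fun_prop
  have hopen : IsOpen {y | 0 < cross (C - B) (y - B) ∧ 0 < cross (A - C) (y - C) ∧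
      0 < cross (B - A) (y - A)} :=
    (isOpen_lt continuous_const (hcont B C)).inter
      ((isOpen_lt continuous_const (hcont C A)).inter (isOpen_lt continuous_const (hcont A B)))
  exact interior_maximal
    (fun y hy => mem_convexHull_of_cross_nonneg hD hy.1.le hy.2.1.le hy.2.2.le) hopen ⟨hA, hB, hC⟩

lemma toR_sub (p q : ℤ × ℤ) : toR (p - q) = toR p - toR q := by
  ext <;> simp [toR]

lemma cross_toR_sub (a b p q : ℤ × ℤ) :
    cross (toR b - toR a) (toR q - toR p) = det2 (b - a) (q - p) := by
  rw [← toR_sub, ← toR_sub]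
  simp [cross, det2, toR]

lemma toR_le_toR {p q : ℤ × ℤ} : toR p ≤ toR q ↔ p ≤ q := by
  simp [toR, Prod.le_def]

lemma triPts_subset_Icc (a b c : ℤ × ℤ) : triPts a b c ⊆ Set.Icc (a ⊓ b ⊓ c) (a ⊔ b ⊔ c) := by
  intro p hp
  have hvert : {toR a, toR b, toR c} ⊆ Set.Icc (toR (a ⊓ b ⊓ c)) (toR (a ⊔ b ⊔ c)) := by
    simp only [Set.insert_subset_iff, Set.singleton_subset_iff, Set.mem_Icc, toR_le_toR]
    exact ⟨⟨inf_le_left.trans inf_le_left, le_sup_left.trans le_sup_left⟩,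
      ⟨inf_le_left.trans inf_le_right, le_sup_right.trans le_sup_left⟩, inf_le_right, le_sup_right⟩
  simpa [toR_le_toR] using convexHull_min hvert (convex_Icc _ _) hp

lemma det2_nonneg_of_mem_triPts {a b c p : ℤ × ℤ} (hD : 0 < det2 (b - a) (c - a))
    (hp : p ∈ triPts a b c) :
    0 ≤ det2 (c - b) (p - b) ∧ 0 ≤ det2 (a - c) (p - c) ∧ 0 ≤ det2 (b - a) (p - a) := by
  have hedge (P Q : ℤ × ℤ) (ha : 0 ≤ det2 (Q - P) (a - P)) (hb : 0 ≤ det2 (Q - P) (b - P))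
      (hc : 0 ≤ det2 (Q - P) (c - P)) : 0 ≤ det2 (Q - P) (p - P) := by
    have := cross_sub_nonneg_of_mem_convexHull (P := toR P) (Q := toR Q)
      (by rw [cross_toR_sub]; exact_mod_cast ha) (by rw [cross_toR_sub]; exact_mod_cast hb)
      (by rw [cross_toR_sub]; exact_mod_cast hc) hp
    rw [cross_toR_sub] at this
    exact_mod_cast this
  simp only [det2, Prod.fst_sub, Prod.snd_sub] at hD hedge ⊢
  refine ⟨hedge b c ?_ ?_ ?_, hedge c a ?_ ?_ ?_, hedge a b ?_ ?_ ?_⟩ <;> linarith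

lemma isInternalTri_of_det2 (a b c d : ℤ × ℤ) (hD : 0 < det2 (b - a) (c - a))
    (hd : 0 < det2 (c - b) (d - b) ∧ 0 < det2 (a - c) (d - c) ∧ 0 < det2 (b - a) (d - a))
    (hpts : ∀ p ∈ Finset.Icc (a ⊓ b ⊓ c) (a ⊔ b ⊔ c), 0 ≤ det2 (c - b) (p - b) →
      0 ≤ det2 (a - c) (p - c) → 0 ≤ det2 (b - a) (p - a) → p = a ∨ p = b ∨ p = c ∨ p = d) :
    IsInternalTri {a, b, c, d} := by
  have hint : toR d ∈ interior (convexHull ℝ {toR a, toR b, toR c}) := by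
    obtain ⟨ha, hb, hc⟩ := hd
    apply mem_interior_convexHull_of_cross_pos <;> rw [cross_toR_sub]
    exacts [mod_cast hD, mod_cast ha, mod_cast hb, mod_cast hc]
  have htri : triPts a b c = {a, b, c, d} := by
    refine subset_antisymm (fun p hp => ?_) ?_
    · obtain ⟨h1, h2, h3⟩ := det2_nonneg_of_mem_triPts hD hp
      simpa using hpts p (Finset.mem_Icc.2 (triPts_subset_Icc a b c hp)) h1 h2 h3
    · simp only [Set.insert_subset_iff, Set.singleton_subset_iff]
      exact ⟨subset_convexHull ℝ _ (by simp), subset_convexHull ℝ _ (by simp),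
        subset_convexHull ℝ _ (by simp), interior_subset (s := convexHull ℝ _) hint⟩
  obtain ⟨ha, hb, hc⟩ := hd
  have hcard : ({a, b, c, d} : Set (ℤ × ℤ)).ncard = 4 := by
    have hab : a ≠ b := by rintro rfl; simp [det2] at hD
    have hac : a ≠ c := by rintro rfl; simp [det2] at hD
    have hbc : b ≠ c := by rintro rfl; simp [det2, mul_comm] at hD
    have had : a ≠ d := by rintro rfl; simp [det2] at hc
    have hbd : b ≠ d := by rintro rfl; simp [det2] at ha
    have hcd : c ≠ d := by rintro rfl; simp [det2] at hb
    rw [Set.ncard_insert_of_notMem (by simp [hab, hac, had]),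
      Set.ncard_insert_of_notMem (by simp [hbc, hbd]), Set.ncard_pair hcd]
  exact ⟨a, b, c, d, hD.ne', htri.symm, rfl, hcard, hint⟩

lemma IStable.mem_of_subset_insert {S T : Set (ℤ × ℤ)} {d : ℤ × ℤ} (hS : IStable S)
    (hT : IsInternalTri T) (hdT : d ∈ T) (hTS : T ⊆ insert d S) : d ∈ S := by
  by_contra hd
  have hcard : T.ncard = 4 := by
    obtain ⟨-, -, -, -, -, -, -, hcard, -⟩ := hT
    exact hcard
  have hTS' : T ∩ S = T \ {d} := by
    ext p
    simp only [Set.mem_inter_iff, Set.mem_sdiff, Set.mem_singleton_iff]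
    exact ⟨fun ⟨hp, hpS⟩ => ⟨hp, by rintro rfl; exact hd hpS⟩,
      fun ⟨hp, hpd⟩ => ⟨hp, (hTS hp).resolve_left hpd⟩⟩
  apply hS T hT
  rw [hTS', Set.ncard_sdiff_singleton_of_mem hdT, hcard]

theorem stmt16 (S : Set (ℤ × ℤ)) (hS : IStable S)
    (h : ({((0 : ℤ), (0 : ℤ)), (0, 1), (1, 0)} : Set (ℤ × ℤ)) ⊆ S) :
    ((-1, -1) : ℤ × ℤ) ∈ S ∧ ((3, -1) : ℤ × ℤ) ∈ S ∧ ((-1, 3) : ℤ × ℤ) ∈ S ∧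
    ((4, 1) : ℤ × ℤ) ∈ S ∧ ((1, -4) : ℤ × ℤ) ∈ S ∧ ((4, 0) : ℤ × ℤ) ∈ S ∧
    ((5, 0) : ℤ × ℤ) ∈ S ∧
    ((fun p : ℤ × ℤ => p + (4, 0)) ''
      ({(0, 0), (1, 0), (0, 1), (-1, -1)} : Set (ℤ × ℤ))) ⊆ S := by
  obtain ⟨h00, h01, h10⟩ : ((0, 0) : ℤ × ℤ) ∈ S ∧ ((0, 1) : ℤ × ℤ) ∈ S ∧ ((1, 0) : ℤ × ℤ) ∈ S := by
    simpa [Set.insert_subset_iff] using h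
  have hm11 : ((-1, -1) : ℤ × ℤ) ∈ S := hS.mem_of_subset_insert
    (isInternalTri_of_det2 (1, 0) (0, 1) (-1, -1) (0, 0) (by decide) (by decide) (by decide))
    (by simp) (by simp [Set.insert_subset_iff, *])
  have h3m1 : ((3, -1) : ℤ × ℤ) ∈ S := hS.mem_of_subset_insert
    (isInternalTri_of_det2 (0, 0) (3, -1) (0, 1) (1, 0) (by decide) (by decide) (by decide))
    (by simp) (by simp [Set.insert_subset_iff, *])
  have hm13 : ((-1, 3) : ℤ × ℤ) ∈ S := hS.mem_of_subset_insert
    (isInternalTri_of_det2 (0, 0) (1, 0) (-1, 3) (0, 1) (by decide) (by decide) (by decide))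
    (by simp) (by simp [Set.insert_subset_iff, *])
  have h41 : ((4, 1) : ℤ × ℤ) ∈ S := hS.mem_of_subset_insert
    (isInternalTri_of_det2 (0, 0) (-1, -1) (4, 1) (1, 0) (by decide) (by decide) (by decide))
    (by simp) (by simp [Set.insert_subset_iff, *])
  have h1m4 : ((1, -4) : ℤ × ℤ) ∈ S := hS.mem_of_subset_insert
    (isInternalTri_of_det2 (0, 1) (-1, 3) (1, -4) (0, 0) (by decide) (by decide) (by decide))
    (by simp) (by simp [Set.insert_subset_iff, *])
  have h40 : ((4, 0) : ℤ × ℤ) ∈ S := hS.mem_of_subset_insert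
    (isInternalTri_of_det2 (1, -4) (4, 0) (4, 1) (3, -1) (by decide) (by decide) (by decide))
    (by simp) (by simp [Set.insert_subset_iff, *])
  have h50 : ((5, 0) : ℤ × ℤ) ∈ S := hS.mem_of_subset_insert
    (isInternalTri_of_det2 (3, -1) (5, 0) (4, 1) (4, 0) (by decide) (by decide) (by decide))
    (by simp) (by simp [Set.insert_subset_iff, *])
  refine ⟨hm11, h3m1, hm13, h41, h1m4, h40, h50, ?_⟩
  simp [Set.image_insert_eq, Set.insert_subset_iff, *]
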